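/- arXiv:math/0412325 — 2 statements merged into one kernel-verified Lean document; each statement's English description precedes it below -/
import Mathlib

section
/- In the cohomology algebra H^*(m_0), the class [e^1] annihilates every class of the form ω(ξ ∧ e^i ∧ e^{i+1}): the product [e^1] ∧ [ω(ξ ∧ e^i ∧ e^{i+1})] = 0. -/
variable (K : Type*) [Field K] [CharZero K]

/-- The cochain `e^i` (`i ≥ 1`) dual to the basis vector `e_i` of the Lie algebra `m₀`. -/
noncomputable def e (i : ℕ) : ExteriorAlgebra K (ℕ →₀ K) :=
  ExteriorAlgebra.ι K (Finsupp.single (i - 1) (1 : K))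

/-- The monomial cochain `e^{i_1} ∧ ... ∧ e^{i_q}`. -/
noncomputable def mono (s : Finset ℕ) : ExteriorAlgebra K (ℕ →₀ K) :=
  ((s.sort (· ≤ ·)).map (e K)).prod

/-- `C^q`: the span of the `q`-cochains `e^{i_1} ∧ ... ∧ e^{i_q}`. -/
noncomputable def LamDeg (q : ℕ) : Submodule K (ExteriorAlgebra K (ℕ →₀ K)) :=
  Submodule.span K {x | ∃ s : Finset ℕ,
    s.card = q ∧ (∀ i ∈ s, 1 ≤ i) ∧ x = mono K s}

/-!
On the whole exterior algebra the differential is `d = e^1 ∧ D`: both sides are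
(anti)derivations agreeing on the generators, since `d e^{j+1} = e^1 ∧ e^j = e^1 ∧ D e^{j+1}`.
Hence it suffices to find `c` with `D c = ω`. Writing `y = ξ ∧ e^i`, the cochain
`c = Σ_l (-1)^l (l+1) D^l y ∧ e^{i+2+l}` works: since `D e^{i+2+l} = e^{i+1+l}`, the terms of
`D c` telescope to `Σ_l (-1)^l D^l y ∧ e^{i+1+l}`, the boundary term vanishing as `D^L y = 0`.
-/

open Finset

theorem map_sum_neg_one_pow_mul_succ_smul {R A : Type*} [CommRing R] [Ring A] [Module R A]
    (D : Module.End R A) (f : ℕ → A) (hf : ∀ x l, D (x * f (l + 1)) = D x * f (l + 1) + x * f l)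
    (y : A) (L : ℕ) :
    D (∑ l ∈ range L, ((-1 : R) ^ l * (l + 1)) • ((D ^ l) y * f (l + 1))) =
      ∑ l ∈ range L, (-1 : R) ^ l • ((D ^ l) y * f l) -
        ((-1 : R) ^ L * L) • ((D ^ L) y * f L) := by
  induction L with
  | zero => simp
  | succ n ih =>
    rw [sum_range_succ, map_add, ih, map_smul, hf, ← Module.End.mul_apply, ← pow_succ',
      sum_range_succ]
    push_cast
    module

section Cochains

variable {K}
omit [CharZero K]

theorem ι_single_eq_smul_e (j : ℕ) (c : K) :
    ExteriorAlgebra.ι K (Finsupp.single j c) = c • e K (j + 1) := by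
  rw [e, Nat.add_sub_cancel, ← map_smul, Finsupp.smul_single_one]

theorem one_mem_LamDeg_zero : (1 : ExteriorAlgebra K (ℕ →₀ K)) ∈ LamDeg K 0 :=
  Submodule.subset_span ⟨∅, by simp [mono]⟩

theorem ι_mem_LamDeg_one (m : ℕ →₀ K) : ExteriorAlgebra.ι K m ∈ LamDeg K 1 := by
  induction m using Finsupp.induction_linear with
  | zero => simp
  | add m n hm hn => rw [map_add]; exact add_mem hm hn
  | single j c =>
    rw [ι_single_eq_smul_e]
    exact Submodule.smul_mem _ _ (Submodule.subset_span ⟨{j + 1}, by simp [mono]⟩)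

theorem ι_mul_e_comm (m : ℕ →₀ K) (a : ℕ) :
    ExteriorAlgebra.ι K m * e K a = -(e K a * ExteriorAlgebra.ι K m) :=
  eq_neg_of_add_eq_zero_left (ExteriorAlgebra.ι_add_mul_swap _ _)

variable (d D : Module.End K (ExteriorAlgebra K (ℕ →₀ K)))
  (hdLeib : ∀ p : ℕ, ∀ x ∈ LamDeg K p, ∀ y,
    d (x * y) = d x * y + ((-1 : K) ^ p) • (x * d y))
  (hd1 : d (e K 1) = 0) (hd2 : d (e K 2) = 0)
  (hd : ∀ i, 2 ≤ i → d (e K (i + 1)) = e K 1 * e K i)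
  (hDLeib : ∀ x y, D (x * y) = D x * y + x * D y)
  (hD1 : D (e K 1) = 0) (hD2 : D (e K 2) = 0)
  (hDj : ∀ j, 3 ≤ j → D (e K j) = e K (j - 1))

include hd1 hd2 hd hD1 hD2 hDj in
theorem d_e_eq_e_one_mul_D (a : ℕ) (ha : 1 ≤ a) : d (e K a) = e K 1 * D (e K a) := by
  rcases Nat.lt_or_ge a 3 with h3 | h3
  · interval_cases a
    · rw [hd1, hD1, mul_zero]
    · rw [hd2, hD2, mul_zero]
  · obtain ⟨j, rfl⟩ : ∃ j, a = j + 1 := ⟨a - 1, by omega⟩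
    rw [hd j (by omega), hDj _ h3, Nat.add_sub_cancel]

include hd1 hd2 hd hD1 hD2 hDj in
theorem d_ι_eq_e_one_mul_D (m : ℕ →₀ K) :
    d (ExteriorAlgebra.ι K m) = e K 1 * D (ExteriorAlgebra.ι K m) := by
  induction m using Finsupp.induction_linear with
  | zero => simp
  | add m n hm hn => rw [map_add, map_add, map_add, hm, hn, mul_add]
  | single j c =>
    rw [ι_single_eq_smul_e, map_smul, map_smul,
      d_e_eq_e_one_mul_D d D hd1 hd2 hd hD1 hD2 hDj _ (by omega), mul_smul_comm]

include hdLeib hd1 hd2 hd hDLeib hD1 hD2 hDj in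
theorem d_eq_e_one_mul_D (x : ExteriorAlgebra K (ℕ →₀ K)) : d x = e K 1 * D x := by
  have hd_one : d 1 = 0 := by simpa using hdLeib 0 1 one_mem_LamDeg_zero 1
  have hD_one : D 1 = 0 := by simpa using hDLeib 1 1
  induction x using CliffordAlgebra.left_induction with
  | algebraMap r => rw [Algebra.algebraMap_eq_smul_one, map_smul, map_smul, hd_one, hD_one,
      smul_zero, mul_zero]
  | add x y hx hy => rw [map_add, map_add, hx, hy, mul_add]
  | ι_mul x m hx =>
    rw [hdLeib 1 _ (ι_mem_LamDeg_one m), hDLeib, d_ι_eq_e_one_mul_D d D hd1 hd2 hd hD1 hD2 hDj,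
      hx, ← mul_assoc (ExteriorAlgebra.ι K m), ι_mul_e_comm]
    simp only [pow_one, neg_one_smul, neg_mul, mul_add, mul_assoc]
    abel

end Cochains

theorem stmt8 (d D : Module.End K (ExteriorAlgebra K (ℕ →₀ K)))
    (hdLeib : ∀ p : ℕ, ∀ x ∈ LamDeg K p, ∀ y,
      d (x * y) = d x * y + ((-1 : K) ^ p) • (x * d y))
    (hd1 : d (e K 1) = 0) (hd2 : d (e K 2) = 0)
    (hd : ∀ i, 2 ≤ i → d (e K (i + 1)) = e K 1 * e K i)
    (hDLeib : ∀ x y, D (x * y) = D x * y + x * D y)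
    (hD1 : D (e K 1) = 0) (hD2 : D (e K 2) = 0)
    (hDj : ∀ j, 3 ≤ j → D (e K j) = e K (j - 1))
    (i : ℕ) (hi : 2 ≤ i) (s : Finset ℕ)
    (L : ℕ) (hL : ∀ l, L ≤ l → (D ^ l) (mono K s * e K i) = 0) :
    ∃ c, d c =
      e K 1 * ∑ l ∈ Finset.range L,
        ((-1 : K) ^ l) • ((D ^ l) (mono K s * e K i) * e K (i + 1 + l)) := by
  have hshift : ∀ x l, D (x * e K (i + 1 + (l + 1))) =
      D x * e K (i + 1 + (l + 1)) + x * e K (i + 1 + l) := fun x l => by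
    rw [hDLeib, hDj _ (by omega), show i + 1 + (l + 1) - 1 = i + 1 + l by omega]
  refine ⟨∑ l ∈ range L, ((-1 : K) ^ l * (l + 1)) •
    ((D ^ l) (mono K s * e K i) * e K (i + 1 + (l + 1))), ?_⟩
  have hDc := map_sum_neg_one_pow_mul_succ_smul D (fun l => e K (i + 1 + l)) hshift
    (mono K s * e K i) L
  rw [d_eq_e_one_mul_D d D hdLeib hd1 hd2 hd hDLeib hD1 hD2 hDj, hDc, hL L le_rfl, zero_mul,
    smul_zero, sub_zero]
end

section
/- dim H^2_k(m_0) = 1 if k = 2j+1 with j ≥ 2 (i.e., k is odd and k ≥ 5), and dim H^2_k(m_0) = 0 otherwise, for the second Chevalley–Eilenberg cohomology of m_0 graded by weight. -/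
/-!
The monomials `e^{i₁} ∧ ⋯ ∧ e^{i_q}` belong to a basis of the exterior algebra, so cochains can
be compared coefficientwise. `C²_k` has basis `w_i = e^i ∧ e^{k-i}`, `1 ≤ i ≤ m = ⌊(k-1)/2⌋`, and
`d w_1 = 0`, `d w_i = u_{i-1} + u_i` for `i ≥ 2`, where `u_j = e^1 ∧ e^j ∧ e^{k-1-j}`; here
`u_1 = 0`, and `u_m = 0` when `k` is odd. Comparing coefficients of the `u_a`, `d (∑ c_i w_i) = 0`
means `c_i + c_{i+1} = 0` for `2 ≤ i < m`, and also `c_m = 0` when `k` is even and `m ≥ 2`. So the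
cocycles are spanned by `w_1 = d e^{k-1}` for even `k`, and by `w_1` and `∑_{i ≥ 2} (-1)^i w_i`
for odd `k`; the latter is nonzero iff `k ≥ 5`.
-/

variable (K : Type*) [Field K] [CharZero K]

/-- `C^q_k`: the span of the `q`-cochains `e^{i_1} ∧ ... ∧ e^{i_q}`,
`1 ≤ i_1 < ... < i_q`, of weight `i_1 + ... + i_q = k`. -/
noncomputable def LamWt (q k : ℕ) : Submodule K (ExteriorAlgebra K (ℕ →₀ K)) :=
  Submodule.span K {x | ∃ s : Finset ℕ,
    s.card = q ∧ (∀ i ∈ s, 1 ≤ i) ∧ (∑ i ∈ s, i) = k ∧ x = mono K s}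

open Module

theorem ExteriorAlgebra.basis_apply_eq_prod_sort {R M I : Type*} [CommRing R] [AddCommGroup M]
    [Module R M] [LinearOrder I] (b : Basis I R M) (s : Finset I) :
    b.ExteriorAlgebra s = ((s.sort (· ≤ ·)).map fun i => ι R (b i)).prod := by
  rw [ExteriorAlgebra.basis_apply_ofCard b rfl, ιMulti_family, ιMulti_apply, List.ofFn_eq_map,
    ← s.listMap_orderEmbOfFin_finRange rfl, List.map_map]
  rfl

theorem Finset.map_succ_image_pred {s : Finset ℕ} (hs : ∀ i ∈ s, 1 ≤ i) :
    (s.image (· - 1)).map (addRightEmbedding 1) = s := by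
  ext i
  simp only [Finset.mem_map, Finset.mem_image, addRightEmbedding_apply]
  constructor
  · rintro ⟨_, ⟨j, hj, rfl⟩, rfl⟩
    rwa [Nat.sub_add_cancel (hs j hj)]
  · intro hi
    exact ⟨i - 1, ⟨i, hi, rfl⟩, Nat.sub_add_cancel (hs i hi)⟩

theorem Submodule.eq_sum_smul_of_mem_span_image {R M ι : Type*} [CommSemiring R] [AddCommMonoid M]
    [Module R M] [DecidableEq ι] {v : ι → M} {f : ι → M →ₗ[R] R} {s : Finset ι}
    (hf : ∀ i ∈ s, ∀ j ∈ s, f i (v j) = if i = j then 1 else 0) {x : M}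
    (hx : x ∈ Submodule.span R (v '' s)) : x = ∑ i ∈ s, f i x • v i := by
  let P : M →ₗ[R] M := ∑ i ∈ s, (f i).smulRight (v i)
  have hP : Set.EqOn P (LinearMap.id : M →ₗ[R] M) (v '' s) := by
    rintro _ ⟨j, hj, rfl⟩
    rw [Finset.mem_coe] at hj
    simp only [P, LinearMap.sum_apply, LinearMap.smulRight_apply, LinearMap.id_apply]
    rw [Finset.sum_congr rfl fun i hi => by rw [hf i hi j hj]]
    simp [hj]
  simpa [P] using (LinearMap.eqOn_span hP hx).symm

section Cochains

variable {F : Type*} [Field F]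

variable (F) in
noncomputable abbrev monoBasis : Basis (Finset ℕ) F (ExteriorAlgebra F (ℕ →₀ F)) :=
  Finsupp.basisSingleOne.ExteriorAlgebra

theorem mono_map_succ (t : Finset ℕ) : mono F (t.map (addRightEmbedding 1)) = monoBasis F t := by
  rw [ExteriorAlgebra.basis_apply_eq_prod_sort, mono,
    ← Finset.map_sort (addRightEmbedding 1) t (· ≤ ·) _ fun a _ b _ => by simp, List.map_map]
  rfl

theorem mono_eq_monoBasis {s : Finset ℕ} (hs : ∀ i ∈ s, 1 ≤ i) :
    mono F s = monoBasis F (s.image (· - 1)) := by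
  conv_lhs => rw [← Finset.map_succ_image_pred hs]
  exact mono_map_succ _

/-- `e i` is the `(i - 1)`-st basis vector of `ℕ →₀ F`, hence the shift of indices. -/
noncomputable def monoCoeff (s : Finset ℕ) : ExteriorAlgebra F (ℕ →₀ F) →ₗ[F] F :=
  (monoBasis F).coord (s.image (· - 1))

theorem monoCoeff_mono {s t : Finset ℕ} (hs : ∀ i ∈ s, 1 ≤ i) (ht : ∀ i ∈ t, 1 ≤ i) :
    monoCoeff s (mono F t) = if s = t then 1 else 0 := by
  rw [mono_eq_monoBasis ht, monoCoeff, Basis.coord_apply, Basis.repr_self, Finsupp.single_apply]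
  refine if_congr ⟨fun h => ?_, fun h => h ▸ rfl⟩ rfl rfl
  rw [← Finset.map_succ_image_pred hs, ← Finset.map_succ_image_pred ht, h]

theorem mono_ne_zero {s : Finset ℕ} (hs : ∀ i ∈ s, 1 ≤ i) : mono F s ≠ 0 := by
  rw [mono_eq_monoBasis hs]
  exact (monoBasis F).ne_zero _

theorem e_mul_self (i : ℕ) : e F i * e F i = 0 :=
  ExteriorAlgebra.ι_sq_zero _

theorem e_mul_comm (i j : ℕ) : e F i * e F j = -(e F j * e F i) :=
  eq_neg_of_add_eq_zero_left (ExteriorAlgebra.ι_add_mul_swap _ _)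

theorem mono_singleton (i : ℕ) : mono F {i} = e F i := by
  simp [mono]

theorem mono_pair {a b : ℕ} (hab : a < b) : mono F {a, b} = e F a * e F b := by
  rw [mono, Finset.sort_insert _ (by simpa using hab.le) (by simpa using hab.ne)]
  simp

theorem mono_triple {a b c : ℕ} (hab : a < b) (hbc : b < c) :
    mono F {a, b, c} = e F a * (e F b * e F c) := by
  rw [mono, Finset.sort_insert _ (by simp; omega) (by simp; omega),
    Finset.sort_insert _ (by simpa using hbc.le) (by simpa using hbc.ne)]
  simp

theorem monoCoeff_mono_pair {a b c d : ℕ} (ha : 1 ≤ a) (hab : a ≤ b) (hc : 1 ≤ c) (hcd : c < d)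
    (hw : a + b = c + d) :
    monoCoeff {a, b} (mono F {c, d}) = if a = c then 1 else 0 := by
  rw [monoCoeff_mono (by simp; omega) (by simp; omega)]
  refine if_congr ⟨fun h => ?_, fun h => by rw [h, show b = d by omega]⟩ rfl rfl
  have hac := h ▸ (by simp : a ∈ ({a, b} : Finset ℕ))
  have hbd := h ▸ (by simp : b ∈ ({a, b} : Finset ℕ))
  have hca := h.symm ▸ (by simp : c ∈ ({c, d} : Finset ℕ))
  simp only [Finset.mem_insert, Finset.mem_singleton] at hac hbd hca
  omega

theorem monoCoeff_e_mul_e_mul_e {k a j : ℕ} (ha : 2 ≤ a) (hak : a < k - 1 - a) (hj : 1 ≤ j)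
    (hjk : j ≤ k - 1 - j) :
    monoCoeff {1, a, k - 1 - a} (e F 1 * (e F j * e F (k - 1 - j))) = if a = j then 1 else 0 := by
  rcases hj.eq_or_lt with rfl | hj
  · rw [← mul_assoc, e_mul_self, zero_mul, map_zero, if_neg (by omega)]
  rcases hjk.eq_or_lt with hjk | hjk
  · rw [← hjk, e_mul_self, mul_zero, map_zero, if_neg (by omega)]
  rw [← mono_triple hj hjk, monoCoeff_mono (by simp; omega) (by simp; omega)]
  refine if_congr ⟨fun h => ?_, fun h => by rw [h]⟩ rfl rfl
  have haj := h ▸ (by simp : a ∈ ({1, a, k - 1 - a} : Finset ℕ))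
  have hja := h.symm ▸ (by simp : j ∈ ({1, j, k - 1 - j} : Finset ℕ))
  simp only [Finset.mem_insert, Finset.mem_singleton] at haj hja
  omega

theorem LamWt_eq_span_image (q k : ℕ) :
    LamWt F q k = Submodule.span F
      (mono F '' {s | s.card = q ∧ (∀ i ∈ s, 1 ≤ i) ∧ ∑ i ∈ s, i = k}) := by
  unfold LamWt
  congr 1
  ext x
  constructor
  · rintro ⟨s, hc, hp, hs, rfl⟩
    exact ⟨s, ⟨hc, hp, hs⟩, rfl⟩
  · rintro ⟨s, ⟨hc, hp, hs⟩, rfl⟩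
    exact ⟨s, hc, hp, hs, rfl⟩

theorem setOf_card_two_sum_eq (k : ℕ) :
    {s : Finset ℕ | s.card = 2 ∧ (∀ i ∈ s, 1 ≤ i) ∧ ∑ i ∈ s, i = k} =
      (fun i => {i, k - i}) '' Finset.Icc 1 ((k - 1) / 2) := by
  ext s
  simp only [Set.mem_ofPred_eq, Set.mem_image, Finset.coe_Icc, Set.mem_Icc, Finset.card_eq_two]
  constructor
  · rintro ⟨⟨a, b, hab, rfl⟩, hpos, hsum⟩
    simp only [Finset.mem_insert, Finset.mem_singleton, forall_eq_or_imp, forall_eq] at hpos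
    rw [Finset.sum_pair hab] at hsum
    rcases hab.lt_or_gt with hab | hab
    · exact ⟨a, by omega, by rw [show k - a = b by omega]⟩
    · exact ⟨b, by omega, by rw [show k - b = a by omega, Finset.pair_comm]⟩
  · rintro ⟨i, hi, rfl⟩
    refine ⟨⟨i, k - i, by omega, rfl⟩, by simp; omega, by rw [Finset.sum_pair (by omega)]; omega⟩

theorem setOf_card_one_sum_eq {k : ℕ} (hk : 1 ≤ k) :
    {s : Finset ℕ | s.card = 1 ∧ (∀ i ∈ s, 1 ≤ i) ∧ ∑ i ∈ s, i = k} = {{k}} := by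
  ext s
  simp only [Set.mem_ofPred_eq, Set.mem_singleton_iff, Finset.card_eq_one]
  constructor
  · rintro ⟨⟨a, rfl⟩, -, hsum⟩
    rw [← hsum, Finset.sum_singleton]
  · rintro rfl
    simpa using hk

theorem LamWt_two_eq (k : ℕ) :
    LamWt F 2 k =
      Submodule.span F ((fun i => mono F {i, k - i}) '' Finset.Icc 1 ((k - 1) / 2)) := by
  rw [LamWt_eq_span_image, setOf_card_two_sum_eq, Set.image_image]

theorem LamWt_one_eq {k : ℕ} (hk : 1 ≤ k) : LamWt F 1 k = Submodule.span F {e F k} := by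
  rw [LamWt_eq_span_image, setOf_card_one_sum_eq hk, Set.image_singleton, mono_singleton]

theorem LamWt_two_eq_bot {k : ℕ} (hk : k < 3) : LamWt F 2 k = ⊥ := by
  rw [LamWt_two_eq, Finset.Icc_eq_empty (by omega), Finset.coe_empty, Set.image_empty,
    Submodule.span_empty]

theorem eq_sum_of_mem_LamWt_two {k : ℕ} {x : ExteriorAlgebra F (ℕ →₀ F)}
    (hx : x ∈ LamWt F 2 k) :
    x = ∑ i ∈ Finset.Icc 1 ((k - 1) / 2), monoCoeff {i, k - i} x • mono F {i, k - i} := by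
  refine Submodule.eq_sum_smul_of_mem_span_image (fun i hi j hj => ?_)
    (LamWt_two_eq (F := F) k ▸ hx)
  simp only [Finset.mem_Icc] at hi hj
  exact monoCoeff_mono_pair (by omega) (by omega) (by omega) (by omega) (by omega)

theorem monoCoeff_pair_self_of_mem_LamWt_two {j : ℕ} {x : ExteriorAlgebra F (ℕ →₀ F)}
    (hx : x ∈ LamWt F 2 (2 * j)) : monoCoeff {j, j} x = 0 := by
  rw [LamWt_two_eq] at hx
  refine LinearMap.eqOn_span (f := monoCoeff {j, j}) (g := 0) ?_ hx
  rintro _ ⟨i, hi, rfl⟩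
  simp only [Finset.coe_Icc, Set.mem_Icc] at hi
  rw [monoCoeff_mono_pair (by omega) le_rfl hi.1 (by omega) (by omega), if_neg (by omega),
    LinearMap.zero_apply]

theorem mono_pair_mem_LamWt_two {k i : ℕ} (hi : 1 ≤ i) (hik : i < k - i) :
    mono F {i, k - i} ∈ LamWt F 2 k := by
  rw [LamWt_two_eq]
  exact Submodule.subset_span ⟨i, by simp; omega, rfl⟩

variable (F) in
noncomputable def oddCocycle (k : ℕ) : ExteriorAlgebra F (ℕ →₀ F) :=
  ∑ i ∈ Finset.Icc 2 ((k - 1) / 2), (-1 : F) ^ i • mono F {i, k - i}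

theorem oddCocycle_mem_LamWt_two (k : ℕ) : oddCocycle F k ∈ LamWt F 2 k :=
  Submodule.sum_mem _ fun i hi => Submodule.smul_mem _ _ <|
    mono_pair_mem_LamWt_two (by simp at hi; omega) (by simp at hi; omega)

theorem monoCoeff_oddCocycle {k j : ℕ} (hj : 1 ≤ j) (hjk : j < k - j) :
    monoCoeff {j, k - j} (oddCocycle F k) = if 2 ≤ j then (-1) ^ j else 0 := by
  simp only [oddCocycle, map_sum, map_smul, smul_eq_mul]
  rw [Finset.sum_congr rfl fun i hi => by
    simp only [Finset.mem_Icc] at hi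
    rw [monoCoeff_mono_pair hj hjk.le (by omega) (by omega) (by omega)]]
  simp only [mul_ite, mul_one, mul_zero, Finset.sum_ite_eq, Finset.mem_Icc]
  exact if_congr (by omega) rfl rfl

theorem finrank_span_mono_one_pair_oddCocycle {k : ℕ} (hk : Odd k) (hk5 : 5 ≤ k) :
    finrank F (Submodule.span F {mono F {1, k - 1}, oddCocycle F k}) = 2 := by
  obtain ⟨j, rfl⟩ := hk
  have hli : LinearIndependent F ![mono F {1, 2 * j + 1 - 1}, oddCocycle F (2 * j + 1)] := by
    refine LinearIndependent.pair_iff.mpr fun s t hst => ⟨?_, ?_⟩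
    · have := congrArg (monoCoeff {1, 2 * j + 1 - 1}) hst
      rwa [map_add, map_smul, map_smul, monoCoeff_oddCocycle le_rfl (by omega), if_neg (by omega),
        monoCoeff_mono_pair le_rfl (by omega) le_rfl (by omega) rfl, if_pos rfl, map_zero,
        smul_eq_mul, smul_zero, mul_one, add_zero] at this
    · have := congrArg (monoCoeff {2, 2 * j + 1 - 2}) hst
      rwa [map_add, map_smul, map_smul, monoCoeff_oddCocycle (by omega) (by omega), if_pos le_rfl,
        monoCoeff_mono_pair (by omega) (by omega) le_rfl (by omega) (by omega), if_neg (by omega),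
        map_zero, smul_zero, zero_add, smul_eq_mul, neg_one_sq, mul_one] at this
  rw [← Matrix.range_cons_cons_empty _ _ ![], finrank_span_eq_card hli, Fintype.card_fin]

end Cochains

section Differential

variable {F : Type*} [Field F] {d : Module.End F (ExteriorAlgebra F (ℕ →₀ F))}

def IsAntiderivation (d : Module.End F (ExteriorAlgebra F (ℕ →₀ F))) : Prop :=
  ∀ p : ℕ, ∀ x ∈ LamDeg F p, ∀ y, d (x * y) = d x * y + ((-1 : F) ^ p) • (x * d y)

theorem IsAntiderivation.map_e_mul (hLeib : IsAntiderivation d) {i : ℕ} (hi : 1 ≤ i)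
    (y : ExteriorAlgebra F (ℕ →₀ F)) : d (e F i * y) = d (e F i) * y - e F i * d y := by
  have he : e F i ∈ LamDeg F 1 := Submodule.subset_span
    ⟨{i}, Finset.card_singleton i, by simpa using hi, (mono_singleton i).symm⟩
  rw [hLeib 1 _ he, pow_one, neg_one_smul, sub_eq_add_neg]

theorem map_e_of_two_le (h2 : d (e F 2) = 0) (hd : ∀ i, 2 ≤ i → d (e F (i + 1)) = e F 1 * e F i)
    {j : ℕ} (hj : 2 ≤ j) : d (e F j) = e F 1 * e F (j - 1) := by
  obtain rfl | hj := hj.eq_or_lt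
  · rw [h2, e_mul_self]
  · obtain ⟨i, rfl⟩ := Nat.exists_eq_add_of_lt hj
    rw [hd _ (by omega), Nat.add_sub_cancel]

theorem map_mono_one_pair (hLeib : IsAntiderivation d) (h1 : d (e F 1) = 0)
    (h2 : d (e F 2) = 0) (hd : ∀ i, 2 ≤ i → d (e F (i + 1)) = e F 1 * e F i) {k : ℕ}
    (hk : 3 ≤ k) : d (mono F {1, k - 1}) = 0 := by
  rw [mono_pair (by omega), hLeib.map_e_mul le_rfl, h1, map_e_of_two_le h2 hd (by omega),
    ← mul_assoc, e_mul_self, zero_mul, zero_mul, sub_zero]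

theorem map_mono_pair (hLeib : IsAntiderivation d) (h2 : d (e F 2) = 0)
    (hd : ∀ i, 2 ≤ i → d (e F (i + 1)) = e F 1 * e F i) {k i : ℕ} (hi : 2 ≤ i) (hik : i < k - i) :
    d (mono F {i, k - i}) =
      e F 1 * (e F (i - 1) * e F (k - i)) + e F 1 * (e F i * e F (k - 1 - i)) := by
  rw [mono_pair hik, hLeib.map_e_mul (by omega), map_e_of_two_le h2 hd hi,
    map_e_of_two_le h2 hd (by omega), ← mul_assoc (e F i), e_mul_comm i 1, neg_mul, mul_assoc,
    mul_assoc, sub_neg_eq_add, show k - i - 1 = k - 1 - i by omega]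

theorem map_LamWt_one (h2 : d (e F 2) = 0) (hd : ∀ i, 2 ≤ i → d (e F (i + 1)) = e F 1 * e F i)
    {k : ℕ} (hk : 3 ≤ k) : (LamWt F 1 k).map d = Submodule.span F {mono F {1, k - 1}} := by
  rw [LamWt_one_eq (by omega), Submodule.map_span, Set.image_singleton,
    map_e_of_two_le h2 hd (by omega), mono_pair (by omega)]

theorem monoCoeff_map_mono_pair (hLeib : IsAntiderivation d) (h1 : d (e F 1) = 0)
    (h2 : d (e F 2) = 0) (hd : ∀ i, 2 ≤ i → d (e F (i + 1)) = e F 1 * e F i) {k a i : ℕ}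
    (ha : 2 ≤ a) (hak : a < k - 1 - a) (hi : 1 ≤ i) (hik : i < k - i) :
    monoCoeff {1, a, k - 1 - a} (d (mono F {i, k - i})) =
      monoCoeff {a, k - a} (mono F {i, k - i}) +
        monoCoeff {a + 1, k - (a + 1)} (mono F {i, k - i}) := by
  rw [monoCoeff_mono_pair (by omega) (by omega) hi hik (by omega),
    monoCoeff_mono_pair (by omega) (by omega) hi hik (by omega)]
  obtain rfl | hi := hi.eq_or_lt
  · rw [map_mono_one_pair hLeib h1 h2 hd (by omega), map_zero, if_neg (by omega), if_neg (by omega),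
      add_zero]
  rw [map_mono_pair hLeib h2 hd hi hik, map_add, show k - i = k - 1 - (i - 1) by omega,
    monoCoeff_e_mul_e_mul_e ha hak (by omega) (by omega),
    monoCoeff_e_mul_e_mul_e ha hak (by omega) (by omega), add_comm]
  congr 1
  exact if_congr (by omega) rfl rfl

theorem monoCoeff_map_of_mem_LamWt_two (hLeib : IsAntiderivation d) (h1 : d (e F 1) = 0)
    (h2 : d (e F 2) = 0) (hd : ∀ i, 2 ≤ i → d (e F (i + 1)) = e F 1 * e F i) {k a : ℕ}
    (ha : 2 ≤ a) (hak : a < k - 1 - a) {x : ExteriorAlgebra F (ℕ →₀ F)} (hx : x ∈ LamWt F 2 k) :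
    monoCoeff {1, a, k - 1 - a} (d x) =
      monoCoeff {a, k - a} x + monoCoeff {a + 1, k - (a + 1)} x := by
  rw [LamWt_two_eq] at hx
  refine LinearMap.eqOn_span (f := (monoCoeff {1, a, k - 1 - a}).comp d)
    (g := monoCoeff {a, k - a} + monoCoeff {a + 1, k - (a + 1)}) ?_ hx
  rintro _ ⟨i, hi, rfl⟩
  simp only [Finset.coe_Icc, Set.mem_Icc] at hi
  exact monoCoeff_map_mono_pair hLeib h1 h2 hd ha hak hi.1 (by omega)

theorem monoCoeff_eq_zero_of_cocycle_of_even (hLeib : IsAntiderivation d) (h1 : d (e F 1) = 0)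
    (h2 : d (e F 2) = 0) (hd : ∀ i, 2 ≤ i → d (e F (i + 1)) = e F 1 * e F i) {k : ℕ}
    (hk : Even k) {x : ExteriorAlgebra F (ℕ →₀ F)} (hx : x ∈ LamWt F 2 k) (hdx : d x = 0)
    {i : ℕ} (hi : 2 ≤ i) (him : i ≤ (k - 1) / 2) : monoCoeff {i, k - i} x = 0 := by
  obtain ⟨j, rfl⟩ := hk
  have hrec : ∀ a, 2 ≤ a → a < j + j - 1 - a →
      monoCoeff {a, j + j - a} x + monoCoeff {a + 1, j + j - (a + 1)} x = 0 := fun a ha hak => by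
    rw [← monoCoeff_map_of_mem_LamWt_two hLeib h1 h2 hd ha hak hx, hdx, map_zero]
  induction him using Nat.decreasingInduction with
  | self =>
    have htop := hrec _ hi (by omega)
    rwa [show j + j - ((j + j - 1) / 2 + 1) = j by omega, show (j + j - 1) / 2 + 1 = j by omega,
      monoCoeff_pair_self_of_mem_LamWt_two (by rwa [two_mul]), add_zero] at htop
  | of_succ i him ih =>
    linear_combination hrec i hi (by omega) - ih (by omega)

theorem monoCoeff_eq_of_cocycle_of_odd (hLeib : IsAntiderivation d) (h1 : d (e F 1) = 0)
    (h2 : d (e F 2) = 0) (hd : ∀ i, 2 ≤ i → d (e F (i + 1)) = e F 1 * e F i) {k : ℕ}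
    (hk : Odd k) {x : ExteriorAlgebra F (ℕ →₀ F)} (hx : x ∈ LamWt F 2 k) (hdx : d x = 0)
    {i : ℕ} (hi : 2 ≤ i) (him : i ≤ (k - 1) / 2) :
    monoCoeff {i, k - i} x = (-1) ^ i * monoCoeff {2, k - 2} x := by
  obtain ⟨j, rfl⟩ := hk
  induction i, hi using Nat.le_induction with
  | base => norm_num
  | succ i hi ih =>
    have hrec := monoCoeff_map_of_mem_LamWt_two hLeib h1 h2 hd hi (by omega) hx
    rw [hdx, map_zero, ih (by omega)] at hrec
    rw [pow_succ]
    linear_combination -hrec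

theorem map_sum_Icc_neg_one_pow_smul_mono_pair (hLeib : IsAntiderivation d) (h2 : d (e F 2) = 0)
    (hd : ∀ i, 2 ≤ i → d (e F (i + 1)) = e F 1 * e F i) {k n : ℕ} (hn : 1 ≤ n)
    (hnk : n ≤ (k - 1) / 2) :
    d (∑ i ∈ Finset.Icc 2 n, (-1 : F) ^ i • mono F {i, k - i}) =
      (-1 : F) ^ n • (e F 1 * (e F n * e F (k - 1 - n))) := by
  induction n, hn using Nat.le_induction with
  | base => simp [← mul_assoc, e_mul_self]
  | succ n hn ih =>
    rw [Finset.sum_Icc_succ_top (by omega), map_add, ih (by omega), map_smul,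
      map_mono_pair hLeib h2 hd (by omega) (by omega), Nat.add_sub_cancel,
      show k - (n + 1) = k - 1 - n by omega, pow_succ]
    module

theorem map_oddCocycle (hLeib : IsAntiderivation d) (h2 : d (e F 2) = 0)
    (hd : ∀ i, 2 ≤ i → d (e F (i + 1)) = e F 1 * e F i) {k : ℕ} (hk : Odd k) :
    d (oddCocycle F k) = 0 := by
  obtain ⟨j, rfl⟩ := hk
  rcases Nat.eq_zero_or_pos j with rfl | hj
  · simp [oddCocycle]
  rw [oddCocycle, map_sum_Icc_neg_one_pow_smul_mono_pair hLeib h2 hd (by omega) le_rfl,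
    show 2 * j + 1 - 1 - (2 * j + 1 - 1) / 2 = (2 * j + 1 - 1) / 2 by omega, e_mul_self, mul_zero,
    smul_zero]

theorem cocycles_eq_of_even (hLeib : IsAntiderivation d) (h1 : d (e F 1) = 0)
    (h2 : d (e F 2) = 0) (hd : ∀ i, 2 ≤ i → d (e F (i + 1)) = e F 1 * e F i) {k : ℕ}
    (hk : Even k) (hk3 : 3 ≤ k) :
    LamWt F 2 k ⊓ LinearMap.ker d = Submodule.span F {mono F {1, k - 1}} := by
  apply le_antisymm
  · rintro x ⟨hx, hdx : d x = 0⟩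
    rw [eq_sum_of_mem_LamWt_two hx, Finset.sum_eq_single_of_mem 1 (by simp; omega)
      fun i hi hi1 => by
        simp only [Finset.mem_Icc] at hi
        rw [monoCoeff_eq_zero_of_cocycle_of_even hLeib h1 h2 hd hk hx hdx (by omega) hi.2,
          zero_smul]]
    exact Submodule.smul_mem _ _ (Submodule.mem_span_singleton_self _)
  · rw [Submodule.span_le, Set.singleton_subset_iff]
    exact ⟨mono_pair_mem_LamWt_two le_rfl (by omega), map_mono_one_pair hLeib h1 h2 hd hk3⟩

theorem cocycles_eq_of_odd (hLeib : IsAntiderivation d) (h1 : d (e F 1) = 0)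
    (h2 : d (e F 2) = 0) (hd : ∀ i, 2 ≤ i → d (e F (i + 1)) = e F 1 * e F i) {k : ℕ}
    (hk : Odd k) (hk3 : 3 ≤ k) :
    LamWt F 2 k ⊓ LinearMap.ker d = Submodule.span F {mono F {1, k - 1}, oddCocycle F k} := by
  apply le_antisymm
  · rintro x ⟨hx, hdx : d x = 0⟩
    have hsum : ∑ i ∈ Finset.Icc 2 ((k - 1) / 2), monoCoeff {i, k - i} x • mono F {i, k - i} =
        monoCoeff {2, k - 2} x • oddCocycle F k := by
      rw [oddCocycle, Finset.smul_sum]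
      refine Finset.sum_congr rfl fun i hi => ?_
      simp only [Finset.mem_Icc] at hi
      rw [monoCoeff_eq_of_cocycle_of_odd hLeib h1 h2 hd hk hx hdx hi.1 hi.2, smul_smul, mul_comm]
    rw [eq_sum_of_mem_LamWt_two hx, ← Finset.insert_Icc_add_one_left_eq_Icc (by omega),
      Finset.sum_insert (by simp), one_add_one_eq_two, hsum]
    exact Submodule.mem_span_pair.mpr ⟨_, _, rfl⟩
  · rw [Submodule.span_le, Set.insert_subset_iff, Set.singleton_subset_iff]
    exact ⟨⟨mono_pair_mem_LamWt_two le_rfl (by omega), map_mono_one_pair hLeib h1 h2 hd hk3⟩,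
      oddCocycle_mem_LamWt_two k, map_oddCocycle hLeib h2 hd hk⟩

end Differential

/-- `dim H^2_k(m₀) = 1` if `k` is odd and `k ≥ 5`, and `0` otherwise, for the second
Chevalley–Eilenberg cohomology of `m₀` graded by weight.  Here `d` is the
Chevalley–Eilenberg differential of `m₀`. -/
theorem stmt9 (d : Module.End K (ExteriorAlgebra K (ℕ →₀ K)))
    (hLeib : ∀ p : ℕ, ∀ x ∈ LamDeg K p, ∀ y,
      d (x * y) = d x * y + ((-1 : K) ^ p) • (x * d y))
    (h1 : d (e K 1) = 0) (h2 : d (e K 2) = 0)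
    (hd : ∀ i, 2 ≤ i → d (e K (i + 1)) = e K 1 * e K i)
    (k : ℕ) :
    Module.finrank K ↥(LamWt K 2 k ⊓ LinearMap.ker d) -
      Module.finrank K ↥((LamWt K 1 k).map d) =
        if k % 2 = 1 ∧ 5 ≤ k then 1 else 0 := by
  rcases lt_or_ge k 3 with hk3 | hk3
  · rw [LamWt_two_eq_bot hk3, bot_inf_eq, finrank_bot, zero_tsub, if_neg (by omega)]
  have hw : mono K {1, k - 1} ≠ 0 := mono_ne_zero (by simp; omega)
  rw [map_LamWt_one h2 hd hk3, finrank_span_singleton hw]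
  rcases Nat.even_or_odd k with hk | hk
  · rw [cocycles_eq_of_even hLeib h1 h2 hd hk hk3, finrank_span_singleton hw,
      if_neg fun h => by rw [Nat.even_iff] at hk; omega]
  rw [cocycles_eq_of_odd hLeib h1 h2 hd hk hk3]
  rcases lt_or_ge k 5 with hk5 | hk5
  · obtain rfl : k = 3 := by rw [Nat.odd_iff] at hk; omega
    rw [show oddCocycle K 3 = 0 by simp [oddCocycle], Set.pair_comm, Submodule.span_insert_zero,
      finrank_span_singleton hw, if_neg (by omega)]
  · rw [finrank_span_mono_one_pair_oddCocycle hk hk5, if_pos ⟨Nat.odd_iff.mp hk, hk5⟩]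
end
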